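/- Let φ ∈ L_S and let ⋁_{i=1}^k φ_i be the DNF of φ. Then φ is prime in L_S if and only if φ entails φ_j for some 1 ≤ j ≤ k. -/

import Mathlib

/-- Finite, loop-free CCS processes over the action set `Act`:
`p ::= 0 | a.p | p + p`. -/
inductive Proc (Act : Type) : Type
  | nil : Proc Act
  | pre : Act → Proc Act → Proc Act
  | plus : Proc Act → Proc Act → Proc Act

/-- The transition relation: `a.p —a→ p`, and `p₁ + p₂ —a→ p'` iff
`p₁ —a→ p'` or `p₂ —a→ p'`. -/
inductive Step {Act : Type} : Proc Act → Act → Proc Act → Prop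
  | pre (a : Act) (p : Proc Act) : Step (Proc.pre a p) a p
  | plusL : ∀ {p₁ p₂ p' : Proc Act} {a : Act},
      Step p₁ a p' → Step (Proc.plus p₁ p₂) a p'
  | plusR : ∀ {p₁ p₂ p' : Proc Act} {a : Act},
      Step p₂ a p' → Step (Proc.plus p₁ p₂) a p'

/-- HML formulas in negation normal form:
`φ ::= tt | ff | φ∧φ | φ∨φ | ⟨a⟩φ | [a]φ`. -/
inductive HML (Act : Type) : Type
  | tt : HML Act
  | ff : HML Act
  | conj : HML Act → HML Act → HML Act
  | disj : HML Act → HML Act → HML Act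
  | dia : Act → HML Act → HML Act
  | box : Act → HML Act → HML Act

/-- The satisfaction relation `p ⊨ φ`. -/
def Sat {Act : Type} : Proc Act → HML Act → Prop
  | _, HML.tt => True
  | _, HML.ff => False
  | p, HML.conj φ ψ => Sat p φ ∧ Sat p ψ
  | p, HML.disj φ ψ => Sat p φ ∨ Sat p ψ
  | p, HML.dia a φ => ∃ p', Step p a p' ∧ Sat p' φ
  | p, HML.box a φ => ∀ p', Step p a p' → Sat p' φ

/-- `φ` entails `ψ` iff every process satisfying `φ` satisfies `ψ`. -/
def Entails {Act : Type} (φ ψ : HML Act) : Prop :=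
  ∀ p : Proc Act, Sat p φ → Sat p ψ

/-- `R` is a simulation relation. -/
def IsSimulation {Act : Type} (R : Proc Act → Proc Act → Prop) : Prop :=
  ∀ p q, R p q → ∀ a p', Step p a p' → ∃ q', Step q a q' ∧ R p' q'

/-- The simulation preorder `≲_S`: the largest simulation. -/
def Sim {Act : Type} (p q : Proc Act) : Prop :=
  ∃ R, IsSimulation R ∧ R p q

/-- The set `I(p)` of initial actions of a process. -/
def initials {Act : Type} (p : Proc Act) : Set Act :=
  {a | ∃ p', Step p a p'}

/-- The fragment `L_S`: `φ ::= tt | ff | φ∧φ | φ∨φ | ⟨a⟩φ`. -/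
inductive InLS {Act : Type} : HML Act → Prop
  | tt : InLS HML.tt
  | ff : InLS HML.ff
  | conj : ∀ {φ ψ : HML Act}, InLS φ → InLS ψ → InLS (HML.conj φ ψ)
  | disj : ∀ {φ ψ : HML Act}, InLS φ → InLS ψ → InLS (HML.disj φ ψ)
  | dia : ∀ {a : Act} {φ : HML Act}, InLS φ → InLS (HML.dia a φ)

/-- The list of disjunction-free disjuncts of the disjunctive normal form,
obtained by rewriting `⟨a⟩(ψ₁∨ψ₂)` to `⟨a⟩ψ₁ ∨ ⟨a⟩ψ₂` and distributing
conjunctions over disjunctions. -/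
def dnfList {Act : Type} : HML Act → List (HML Act)
  | HML.tt => [HML.tt]
  | HML.ff => [HML.ff]
  | HML.conj φ ψ =>
      (dnfList φ).foldr (fun f acc => ((dnfList ψ).map (fun g => HML.conj f g)) ++ acc) []
  | HML.disj φ ψ => dnfList φ ++ dnfList ψ
  | HML.dia a φ => (dnfList φ).map (fun f => HML.dia a f)
  | HML.box a φ => [HML.box a φ]

/-- `φ` is prime in the fragment `L`: whenever `φ` entails a disjunction of
`L`-formulas, it entails one of the disjuncts. -/
def PrimeIn {Act : Type} (L : HML Act → Prop) (φ : HML Act) : Prop :=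
  ∀ φ₁ φ₂ : HML Act, L φ₁ → L φ₂ → Entails φ (HML.disj φ₁ φ₂) →
    Entails φ φ₁ ∨ Entails φ φ₂

/-!
Formulas of `L_S` are preserved upwards along the simulation preorder, and every satisfiable
disjunction-free `L_S` formula `ψ` has a characteristic process `c` (`0` for `tt`, `c₁ + c₂` for a
conjunction, `a.c` for `⟨a⟩`) whose models are exactly the processes simulating `c`. If `φ`
entails a satisfiable disjunct `ψ` of its DNF, then `c` satisfies `φ` and is simulated by every
model of `φ`, so whichever of `φ₁`, `φ₂` holds at `c` holds at every model of `φ`. Conversely,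
`φ` entails the disjunction of its DNF, and primality applied along that disjunction picks out
one disjunct.
-/

section Dnf

variable {Act : Type}

theorem mem_dnfList_conj {φ₁ φ₂ ψ : HML Act} :
    ψ ∈ dnfList (HML.conj φ₁ φ₂) ↔ ∃ f ∈ dnfList φ₁, ∃ g ∈ dnfList φ₂, HML.conj f g = ψ := by
  simp [dnfList]

theorem dnfList_ne_nil (φ : HML Act) : dnfList φ ≠ [] := by
  induction φ with
  | conj φ₁ φ₂ ih₁ ih₂ =>
    obtain ⟨f, hf⟩ := List.exists_mem_of_ne_nil _ ih₁
    obtain ⟨g, hg⟩ := List.exists_mem_of_ne_nil _ ih₂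
    exact List.ne_nil_of_mem (mem_dnfList_conj.2 ⟨f, hf, g, hg, rfl⟩)
  | _ => simp_all [dnfList]

theorem sat_iff_exists_mem_dnfList (p : Proc Act) (φ : HML Act) :
    Sat p φ ↔ ∃ ψ ∈ dnfList φ, Sat p ψ := by
  induction φ generalizing p with
  | conj φ₁ φ₂ ih₁ ih₂ =>
    simp only [mem_dnfList_conj, Sat, ih₁, ih₂]
    constructor
    · rintro ⟨⟨f, hf, hpf⟩, g, hg, hpg⟩
      exact ⟨_, ⟨f, hf, g, hg, rfl⟩, hpf, hpg⟩
    · rintro ⟨_, ⟨f, hf, g, hg, rfl⟩, hpf, hpg⟩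
      exact ⟨⟨f, hf, hpf⟩, g, hg, hpg⟩
  | disj φ₁ φ₂ ih₁ ih₂ => simp [dnfList, Sat, ih₁, ih₂, or_and_right, exists_or]
  | dia a φ ih =>
    simp only [dnfList, Sat, ih, List.mem_map]
    constructor
    · rintro ⟨p', hp', f, hf, hpf⟩
      exact ⟨_, ⟨f, hf, rfl⟩, p', hp', hpf⟩
    · rintro ⟨_, ⟨f, hf, rfl⟩, p', hp', hpf⟩
      exact ⟨p', hp', f, hf, hpf⟩
  | _ => simp [dnfList, Sat]

inductive DisjFreeLS : HML Act → Prop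
  | tt : DisjFreeLS HML.tt
  | ff : DisjFreeLS HML.ff
  | conj {φ ψ : HML Act} : DisjFreeLS φ → DisjFreeLS ψ → DisjFreeLS (HML.conj φ ψ)
  | dia {a : Act} {φ : HML Act} : DisjFreeLS φ → DisjFreeLS (HML.dia a φ)

theorem DisjFreeLS.inLS {ψ : HML Act} (hψ : DisjFreeLS ψ) : InLS ψ := by
  induction hψ with
  | tt => exact .tt
  | ff => exact .ff
  | conj _ _ ih₁ ih₂ => exact .conj ih₁ ih₂
  | dia _ ih => exact .dia ih

theorem DisjFreeLS.of_mem_dnfList {φ ψ : HML Act} (hφ : InLS φ) (hψ : ψ ∈ dnfList φ) :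
    DisjFreeLS ψ := by
  induction hφ generalizing ψ with
  | tt => rw [List.mem_singleton.1 hψ]; exact .tt
  | ff => rw [List.mem_singleton.1 hψ]; exact .ff
  | conj _ _ ih₁ ih₂ =>
    obtain ⟨f, hf, g, hg, rfl⟩ := mem_dnfList_conj.1 hψ
    exact .conj (ih₁ hf) (ih₂ hg)
  | disj _ _ ih₁ ih₂ => exact (List.mem_append.1 hψ).elim ih₁ ih₂
  | dia _ ih =>
    obtain ⟨f, hf, rfl⟩ := List.mem_map.1 hψ
    exact .dia (ih hf)

theorem sat_foldr_disj_iff (p : Proc Act) (l : List (HML Act)) :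
    Sat p (l.foldr HML.disj HML.ff) ↔ ∃ ψ ∈ l, Sat p ψ := by
  induction l with
  | nil => simp [Sat]
  | cons ψ l ih => simp [Sat, ih]

end Dnf

section Simulation

variable {Act : Type}

theorem Step.not_nil {a : Act} {p' : Proc Act} : ¬ Step Proc.nil a p' := nofun

theorem Step.pre_iff {a b : Act} {p p' : Proc Act} :
    Step (Proc.pre a p) b p' ↔ b = a ∧ p' = p := by
  constructor
  · rintro ⟨⟩; exact ⟨rfl, rfl⟩
  · rintro ⟨rfl, rfl⟩; exact .pre _ _

theorem Step.plus_iff {a : Act} {p₁ p₂ p' : Proc Act} :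
    Step (Proc.plus p₁ p₂) a p' ↔ Step p₁ a p' ∨ Step p₂ a p' := by
  constructor
  · rintro (_ | h | h)
    · exact .inl h
    · exact .inr h
  · rintro (h | h)
    · exact .plusL h
    · exact .plusR h

theorem Sim.exists_step {p q p' : Proc Act} {a : Act} (hpq : Sim p q) (hp' : Step p a p') :
    ∃ q', Step q a q' ∧ Sim p' q' := by
  obtain ⟨R, hR, hpq⟩ := hpq
  obtain ⟨q', hq', hR'⟩ := hR p q hpq a p' hp'
  exact ⟨q', hq', R, hR, hR'⟩

theorem sim_iff {p q : Proc Act} :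
    Sim p q ↔ ∀ a p', Step p a p' → ∃ q', Step q a q' ∧ Sim p' q' := by
  refine ⟨fun hpq a p' hp' => hpq.exists_step hp', fun h => ?_⟩
  refine ⟨fun p q => ∀ a p', Step p a p' → ∃ q', Step q a q' ∧ Sim p' q', ?_, h⟩
  intro p q hpq a p' hp'
  obtain ⟨q', hq', hsim⟩ := hpq a p' hp'
  exact ⟨q', hq', fun _ _ => hsim.exists_step⟩

theorem Sim.refl (p : Proc Act) : Sim p p :=
  ⟨Eq, by rintro p _ rfl a p' hp'; exact ⟨p', hp', rfl⟩, rfl⟩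

theorem sim_nil (q : Proc Act) : Sim Proc.nil q :=
  sim_iff.2 fun _ _ h => (Step.not_nil h).elim

theorem sim_pre_iff {a : Act} {p q : Proc Act} :
    Sim (Proc.pre a p) q ↔ ∃ q', Step q a q' ∧ Sim p q' := by
  simp [sim_iff (p := Proc.pre a p), Step.pre_iff]

theorem sim_plus_iff {p₁ p₂ q : Proc Act} :
    Sim (Proc.plus p₁ p₂) q ↔ Sim p₁ q ∧ Sim p₂ q := by
  simp only [sim_iff (p := Proc.plus p₁ p₂), sim_iff (p := p₁), sim_iff (p := p₂), Step.plus_iff,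
    or_imp, forall_and]

theorem InLS.sat_of_sim {ψ : HML Act} (hψ : InLS ψ) {p q : Proc Act} (hpq : Sim p q)
    (hp : Sat p ψ) : Sat q ψ := by
  induction hψ generalizing p q with
  | tt => trivial
  | ff => exact hp
  | conj _ _ ih₁ ih₂ => exact ⟨ih₁ hpq hp.1, ih₂ hpq hp.2⟩
  | disj _ _ ih₁ ih₂ => exact hp.imp (ih₁ hpq) (ih₂ hpq)
  | dia _ ih =>
    obtain ⟨p', hp', hsat⟩ := hp
    obtain ⟨q', hq', hsim⟩ := hpq.exists_step hp'
    exact ⟨q', hq', ih hsim hsat⟩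

theorem DisjFreeLS.exists_sim_iff_sat {ψ : HML Act} (hψ : DisjFreeLS ψ) {p : Proc Act}
    (hp : Sat p ψ) : ∃ c, ∀ q, Sim c q ↔ Sat q ψ := by
  induction hψ generalizing p with
  | tt => exact ⟨.nil, fun q => iff_of_true (sim_nil q) trivial⟩
  | ff => exact hp.elim
  | conj _ _ ih₁ ih₂ =>
    obtain ⟨c₁, hc₁⟩ := ih₁ hp.1
    obtain ⟨c₂, hc₂⟩ := ih₂ hp.2
    exact ⟨.plus c₁ c₂, fun q => by rw [sim_plus_iff, hc₁, hc₂]; rfl⟩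
  | @dia a _ _ ih =>
    obtain ⟨p', -, hp'⟩ := hp
    obtain ⟨c, hc⟩ := ih hp'
    exact ⟨.pre a c, fun q => by simp only [sim_pre_iff, hc]; rfl⟩

end Simulation

section Prime

variable {Act : Type} {L : HML Act → Prop}

theorem foldr_disj_ff_of_forall (hff : L HML.ff)
    (hdisj : ∀ φ₁ φ₂, L φ₁ → L φ₂ → L (HML.disj φ₁ φ₂)) :
    ∀ {l : List (HML Act)}, (∀ ψ ∈ l, L ψ) → L (l.foldr HML.disj HML.ff)
  | [], _ => hff
  | _ :: _, hl =>
    hdisj _ _ (List.forall_mem_cons.1 hl).1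
      (foldr_disj_ff_of_forall hff hdisj (List.forall_mem_cons.1 hl).2)

theorem PrimeIn.entails_ff_or_exists_entails {φ : HML Act} (hφ : PrimeIn L φ)
    (hff : L HML.ff) (hdisj : ∀ φ₁ φ₂, L φ₁ → L φ₂ → L (HML.disj φ₁ φ₂))
    {l : List (HML Act)} (hl : ∀ ψ ∈ l, L ψ) (hent : Entails φ (l.foldr HML.disj HML.ff)) :
    Entails φ HML.ff ∨ ∃ ψ ∈ l, Entails φ ψ := by
  induction l with
  | nil => exact .inl hent
  | cons ψ l ih =>
    obtain ⟨hψ, hl⟩ := List.forall_mem_cons.1 hl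
    rcases hφ _ _ hψ (foldr_disj_ff_of_forall hff hdisj hl) hent with h | h
    · exact .inr ⟨ψ, List.mem_cons_self, h⟩
    · exact (ih hl h).imp_right fun ⟨χ, hχ, h⟩ => ⟨χ, List.mem_cons_of_mem ψ hχ, h⟩

theorem PrimeIn.of_forall_not_sat {φ : HML Act} (hφ : ∀ p, ¬ Sat p φ) : PrimeIn L φ :=
  fun _ _ _ _ _ => .inl fun p hp => (hφ p hp).elim

theorem PrimeIn.of_sat_of_forall_sim {φ : HML Act} {c : Proc Act} (hc : Sat c φ)
    (hsim : ∀ q, Sat q φ → Sim c q) : PrimeIn InLS φ := by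
  intro φ₁ φ₂ h₁ h₂ h₁₂
  exact (h₁₂ c hc).imp (fun hc₁ q hq => h₁.sat_of_sim (hsim q hq) hc₁)
    (fun hc₂ q hq => h₂.sat_of_sim (hsim q hq) hc₂)

end Prime

theorem prime_iff_entails_disjunct_LS_general {Act : Type}
    (φ : HML Act) (h : InLS φ) :
    PrimeIn InLS φ ↔ ∃ ψ ∈ dnfList φ, Entails φ ψ := by
  have hdnf (ψ) (hψ : ψ ∈ dnfList φ) : DisjFreeLS ψ := .of_mem_dnfList h hψ
  constructor
  · intro hφ
    have hent : Entails φ ((dnfList φ).foldr HML.disj HML.ff) := fun p hp =>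
      (sat_foldr_disj_iff p _).2 ((sat_iff_exists_mem_dnfList p φ).1 hp)
    rcases hφ.entails_ff_or_exists_entails .ff (fun _ _ => .disj) (fun ψ hψ => (hdnf ψ hψ).inLS)
      hent with hff | hψ
    · obtain ⟨ψ, hψ⟩ := List.exists_mem_of_ne_nil _ (dnfList_ne_nil φ)
      exact ⟨ψ, hψ, fun p hp => (hff p hp).elim⟩
    · exact hψ
  · rintro ⟨ψ, hψ, hφψ⟩
    by_cases hsat : ∃ p, Sat p ψ
    · obtain ⟨p, hp⟩ := hsat
      obtain ⟨c, hc⟩ := (hdnf ψ hψ).exists_sim_iff_sat hp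
      have hcψ : Sat c ψ := (hc c).1 (Sim.refl c)
      exact .of_sat_of_forall_sim ((sat_iff_exists_mem_dnfList c φ).2 ⟨ψ, hψ, hcψ⟩)
        fun q hq => (hc q).2 (hφψ q hq)
    · exact .of_forall_not_sat fun p hp => hsat ⟨p, hφψ p hp⟩

/-- Let `φ ∈ L_S` with DNF `⋁_{i=1}^k φ_i`. Then `φ` is prime in `L_S` iff
`φ` entails `φ_j` for some `1 ≤ j ≤ k`. -/
theorem prime_iff_entails_disjunct_LS {Act : Type} [Fintype Act] [Nonempty Act]
    (φ : HML Act) (h : InLS φ) :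
    PrimeIn InLS φ ↔ ∃ ψ ∈ dnfList φ, Entails φ ψ :=
  prime_iff_entails_disjunct_LS_general φ h
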